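/- The committed spend mechanism (Q^{b*}, T^{b*}) with parameters q̄* = K·(u')⁻¹(cK/λ), t̄* = λ·u(q̄*/K) and price p* = c is robustly optimal: it is incentive compatible and individually rational, and for every incentive compatible and individually rational mechanism (Q,T), inf_{F ∈ 𝓕} E_F[T(F,θ) − c·∑_{i=1}^K Q_i(F,θ)] ≤ inf_{F ∈ 𝓕} E_F[T^{b*}(F,θ) − c·∑_{i=1}^K Q^{b*}_i(F,θ)]. -/

import Mathlib

open MeasureTheory Set Filter Topology

noncomputable section

/-- The type space `Θ = [0,1]^K`. -/
abbrev Theta (K : ℕ) := Fin K → Set.Icc (0:ℝ) 1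

/-- The set `𝓕` of Borel probability measures on `Θ` whose mean total demand is `lam`. -/
def Fcal (K : ℕ) (lam : ℝ) : Set (Measure (Theta K)) :=
  {F | IsProbabilityMeasure F ∧ ∫ θ, (∑ i, (θ i : ℝ)) ∂F = lam}

/-- The buyer's utility from allocation `q` and transfer `t` at type `θ`. -/
def util (K : ℕ) (u : ℝ → ℝ) (θ : Theta K) (q : Fin K → ℝ) (t : ℝ) : ℝ :=
  ∑ i, (θ i : ℝ) * u (q i) - t

/-- Incentive compatibility of a mechanism `(Q,T)`. -/
def IC (K : ℕ) (lam : ℝ) (u : ℝ → ℝ) (Q : Measure (Theta K) → Theta K → Fin K → ℝ)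
    (T : Measure (Theta K) → Theta K → ℝ) : Prop :=
  (∀ F ∈ Fcal K lam, ∀ θ θ' : Theta K,
      util K u θ (Q F θ') (T F θ') ≤ util K u θ (Q F θ) (T F θ)) ∧
  (∀ F ∈ Fcal K lam, ∀ F' ∈ Fcal K lam,
      ∫ θ, util K u θ (Q F' θ) (T F' θ) ∂F ≤ ∫ θ, util K u θ (Q F θ) (T F θ) ∂F)

/-- Individual rationality of a mechanism `(Q,T)`. -/
def IR (K : ℕ) (lam : ℝ) (u : ℝ → ℝ) (Q : Measure (Theta K) → Theta K → Fin K → ℝ)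
    (T : Measure (Theta K) → Theta K → ℝ) : Prop :=
  ∀ F ∈ Fcal K lam, 0 ≤ ∫ θ, util K u θ (Q F θ) (T F θ) ∂F

/-- The profit guarantee `inf_{F ∈ 𝓕} E_F[T(F,θ) - c·∑ᵢ Qᵢ(F,θ)]` (valued in `EReal`). -/
def guarantee (K : ℕ) (lam c : ℝ) (Q : Measure (Theta K) → Theta K → Fin K → ℝ)
    (T : Measure (Theta K) → Theta K → ℝ) : EReal :=
  ⨅ F ∈ Fcal K lam, ((∫ θ, (T F θ - c * ∑ i, Q F θ i) ∂F : ℝ) : EReal)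

/-- The feasible set of the committed spend problem: nonnegative quantity vectors whose
total is at least the committed quantity `qbar`. -/
def feasible (K : ℕ) (qbar : ℝ) : Set (Fin K → ℝ) :=
  {q | (∀ i, 0 ≤ q i) ∧ qbar ≤ ∑ i, q i}

/-- The buyer's objective in the committed spend mechanism:
`∑ᵢ θᵢ·u(qᵢ) − t̄ − p·(∑ᵢ qᵢ − q̄)`. -/
def csObj (K : ℕ) (u : ℝ → ℝ) (θ : Theta K) (qbar tbar p : ℝ) (q : Fin K → ℝ) : ℝ :=
  ∑ i, (θ i : ℝ) * u (q i) - tbar - p * (∑ i, q i - qbar)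

/-! Against the point mass at the mean type `θ = (λ/K, …, λ/K)`, individual rationality caps
any transfer at `∑ᵢ (λ/K)·u(qᵢ)`, so the seller earns at most `K · max_q ((λ/K)·u(q) − c·q)`;
by concavity that maximum sits where `(λ/K)·u'(q) = c`, i.e. at `q*`. The committed spend
mechanism with price `c` earns exactly this amount under every distribution, since its transfer
moves one for one with cost above `q̄*`. It is individually rational because buying `q̄*/K` of
every good is always available to the buyer and is worth `λ·u(q̄*/K) = t̄*` in expectation. -/

lemma ConcaveOn.le_add_mul_sub_of_hasDerivAt {S : Set ℝ} {f : ℝ → ℝ} {f' x y : ℝ}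
    (hf : ConcaveOn ℝ S f) (hx : x ∈ S) (hy : y ∈ S) (hf' : HasDerivAt f f' x) :
    f y ≤ f x + f' * (y - x) := by
  rcases lt_trichotomy y x with hyx | rfl | hxy
  · have hslope := hf.le_slope_of_hasDerivAt hy hx hyx hf'
    rw [slope_def_field, le_div_iff₀ (sub_pos.2 hyx)] at hslope
    linarith
  · simp
  · have hslope := hf.slope_le_of_hasDerivAt hx hy hxy hf'
    rw [slope_def_field, div_le_iff₀ (sub_pos.2 hxy)] at hslope
    linarith

lemma ConcaveOn.mul_sub_mul_le_of_hasDerivAt {S : Set ℝ} {f : ℝ → ℝ} {f' x y a c : ℝ}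
    (hf : ConcaveOn ℝ S f) (hx : x ∈ S) (hy : y ∈ S) (hf' : HasDerivAt f f' x) (ha : 0 ≤ a)
    (hc : a * f' = c) :
    a * f y - c * y ≤ a * f x - c * x := by
  have htangent := mul_le_mul_of_nonneg_left (hf.le_add_mul_sub_of_hasDerivAt hx hy hf') ha
  rw [← hc]
  linarith

section Mechanism

variable {K : ℕ} {lam : ℝ} {u : ℝ → ℝ}

lemma integrable_sum_coe_of_mem_Fcal {F : Measure (Theta K)} (hF : F ∈ Fcal K lam) :
    Integrable (fun θ : Theta K => ∑ i, (θ i : ℝ)) F := by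
  have := hF.1
  have hmeas : Measurable fun θ : Theta K => ∑ i, (θ i : ℝ) :=
    Finset.measurable_sum _ fun i _ => measurable_subtype_coe.comp (measurable_pi_apply i)
  refine Integrable.of_bound (C := K) hmeas.aestronglyMeasurable (ae_of_all _ fun θ => ?_)
  calc ‖∑ i, (θ i : ℝ)‖ ≤ ∑ i, ‖(θ i : ℝ)‖ := norm_sum_le _ _
    _ ≤ ∑ _i : Fin K, (1 : ℝ) := Finset.sum_le_sum fun i _ => by
        rw [Real.norm_of_nonneg (θ i).2.1]; exact (θ i).2.2
    _ = K := by simp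

lemma dirac_const_mem_Fcal (a : Set.Icc (0 : ℝ) 1) :
    Measure.dirac (fun _ : Fin K => a) ∈ Fcal K (K * a) :=
  ⟨inferInstance, by simp [integral_dirac]⟩

lemma guarantee_eq_of_profit_eq {c v : ℝ} {Q : Measure (Theta K) → Theta K → Fin K → ℝ}
    {T : Measure (Theta K) → Theta K → ℝ} (hne : (Fcal K lam).Nonempty)
    (hprofit : ∀ F θ, T F θ - c * ∑ i, Q F θ i = v) :
    guarantee K lam c Q T = v := by
  have hint : ∀ F ∈ Fcal K lam, ∫ θ, (T F θ - c * ∑ i, Q F θ i) ∂F = v := fun F hF => by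
    have := hF.1
    simp [hprofit]
  obtain ⟨F₀, hF₀⟩ := hne
  refine le_antisymm ?_ (le_iInf₂ fun F hF => by rw [hint F hF])
  exact (iInf₂_le F₀ hF₀).trans (by rw [hint F₀ hF₀])

lemma guarantee_le_of_IR {c M : ℝ} {Q : Measure (Theta K) → Theta K → Fin K → ℝ}
    {T : Measure (Theta K) → Theta K → ℝ} (a : Set.Icc (0 : ℝ) 1) (hlam : lam = K * a)
    (hM : ∀ q, 0 ≤ q → a * u q - c * q ≤ M) (hQ : ∀ F θ i, 0 ≤ Q F θ i)
    (hIR : IR K lam u Q T) :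
    guarantee K lam c Q T ≤ (K * M : ℝ) := by
  subst hlam
  set θa : Theta K := fun _ => a
  have hF₀ := dirac_const_mem_Fcal (K := K) a
  have hT : T (.dirac θa) θa ≤ ∑ i, a * u (Q (.dirac θa) θa i) := by
    simpa [util, integral_dirac] using hIR _ hF₀
  have hprofit : T (.dirac θa) θa - c * ∑ i, Q (.dirac θa) θa i ≤ K * M :=
    calc T (.dirac θa) θa - c * ∑ i, Q (.dirac θa) θa i
        ≤ ∑ i, (a * u (Q (.dirac θa) θa i) - c * Q (.dirac θa) θa i) := by
          rw [Finset.sum_sub_distrib, Finset.mul_sum]; linarith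
      _ ≤ ∑ _i : Fin K, M := Finset.sum_le_sum fun i _ => hM _ (hQ _ _ i)
      _ = K * M := by simp
  refine (iInf₂_le _ hF₀).trans ?_
  rw [integral_dirac]
  exact_mod_cast hprofit

def IsCommittedSpend (K : ℕ) (u : ℝ → ℝ) (qbar tbar p : ℝ)
    (Qb : Measure (Theta K) → Theta K → Fin K → ℝ) (Tb : Measure (Theta K) → Theta K → ℝ) :
    Prop :=
  (∀ F θ, Qb F θ ∈ feasible K qbar ∧
    ∀ q ∈ feasible K qbar, csObj K u θ qbar tbar p q ≤ csObj K u θ qbar tbar p (Qb F θ)) ∧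
  ∀ F θ, Tb F θ = tbar + p * (∑ i, Qb F θ i - qbar)

variable {qbar tbar p : ℝ} {Qb : Measure (Theta K) → Theta K → Fin K → ℝ}
  {Tb : Measure (Theta K) → Theta K → ℝ}

lemma IsCommittedSpend.util_eq (h : IsCommittedSpend K u qbar tbar p Qb Tb)
    (F : Measure (Theta K)) (θ θ' : Theta K) :
    util K u θ (Qb F θ') (Tb F θ') = csObj K u θ qbar tbar p (Qb F θ') := by
  rw [h.2, util, csObj]
  ring

lemma IsCommittedSpend.util_le (h : IsCommittedSpend K u qbar tbar p Qb Tb)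
    (F : Measure (Theta K)) (θ : Theta K) {q : Fin K → ℝ} (hq : q ∈ feasible K qbar) :
    csObj K u θ qbar tbar p q ≤ util K u θ (Qb F θ) (Tb F θ) :=
  h.util_eq F θ θ ▸ (h.1 F θ).2 q hq

lemma IsCommittedSpend.IC (h : IsCommittedSpend K u qbar tbar p Qb Tb) :
    IC K lam u Qb Tb := by
  refine ⟨fun F _ θ θ' => h.util_eq F θ θ' ▸ h.util_le F θ (h.1 F θ').1,
    fun F _ F' _ => le_of_eq (integral_congr_ae (ae_of_all _ fun θ => ?_))⟩
  have hle := h.util_le F θ (h.1 F' θ).1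
  have hge := h.util_le F' θ (h.1 F θ).1
  rw [← h.util_eq] at hle hge
  exact le_antisymm hle hge

lemma IsCommittedSpend.IR (h : IsCommittedSpend K u qbar tbar p Qb Tb) (hK : K ≠ 0)
    (hqbar : 0 ≤ qbar) (htbar : tbar ≤ lam * u (qbar / K)) :
    IR K lam u Qb Tb := by
  intro F hF
  have := hF.1
  have hK' : (K : ℝ) ≠ 0 := Nat.cast_ne_zero.2 hK
  have hfeas : (fun _ : Fin K => qbar / K) ∈ feasible K qbar :=
    ⟨fun _ => by positivity, by simp [mul_div_cancel₀ _ hK']⟩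
  have hbound : ∀ θ : Theta K,
      (∑ i, (θ i : ℝ)) * u (qbar / K) - tbar ≤ util K u θ (Qb F θ) (Tb F θ) := fun θ => by
    refine le_of_eq_of_le ?_ (h.util_le F θ hfeas)
    simp [csObj, Finset.sum_mul, mul_div_cancel₀ _ hK']
  have hdemand := (integrable_sum_coe_of_mem_Fcal hF).mul_const (u (qbar / K))
  have hlower : 0 ≤ ∫ θ, ((∑ i, (θ i : ℝ)) * u (qbar / K) - tbar) ∂F := by
    rw [integral_sub hdemand (integrable_const tbar), integral_mul_const, hF.2]
    simpa using htbar
  -- A non-integrable utility has Bochner integral `0`, so only the integrable case has content.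
  by_cases hutil : Integrable (fun θ => util K u θ (Qb F θ) (Tb F θ)) F
  · exact hlower.trans (integral_mono (hdemand.sub (integrable_const tbar)) hutil hbound)
  · rw [integral_undef hutil]

lemma IsCommittedSpend.profit_eq (h : IsCommittedSpend K u qbar tbar p Qb Tb) (F θ) :
    Tb F θ - p * ∑ i, Qb F θ i = tbar - p * qbar := by
  rw [h.2]
  ring

end Mechanism

theorem stmt13_general
    (K : ℕ) (c lam : ℝ) (hlam : 0 < lam ∧ lam < K)
    (u u' : ℝ → ℝ)
    (hu_conc : StrictConcaveOn ℝ (Set.Ici 0) u)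
    (hu_deriv : ∀ x, 0 < x → HasDerivAt u (u' x) x)
    (qstar : ℝ) (hqs_pos : 0 < qstar) (hqs : lam * u' qstar = c * K)
    (qbar tbar : ℝ) (hqbar : qbar = K * qstar) (htbar : tbar = lam * u (qbar / K))
    (Qb : Measure (Theta K) → Theta K → Fin K → ℝ) (Tb : Measure (Theta K) → Theta K → ℝ)
    (hQb : ∀ F θ, Qb F θ ∈ feasible K qbar ∧
      ∀ q ∈ feasible K qbar, csObj K u θ qbar tbar c q ≤ csObj K u θ qbar tbar c (Qb F θ))
    (hTb : ∀ F θ, Tb F θ = tbar + c * (∑ i, Qb F θ i - qbar)) :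
    IC K lam u Qb Tb ∧ IR K lam u Qb Tb ∧
      ∀ Q T, (∀ F θ i, 0 ≤ Q F θ i) → IC K lam u Q T → IR K lam u Q T →
        guarantee K lam c Q T ≤ guarantee K lam c Qb Tb := by
  have hCS : IsCommittedSpend K u qbar tbar c Qb Tb := ⟨hQb, hTb⟩
  have hKpos : (0 : ℝ) < K := hlam.1.trans hlam.2
  have hqK : qbar / K = qstar := by rw [hqbar]; field_simp
  let a : Set.Icc (0 : ℝ) 1 :=
    ⟨lam / K, div_nonneg hlam.1.le hKpos.le, (div_le_one hKpos).2 hlam.2.le⟩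
  have hlam_eq : lam = K * a := by simp only [a]; field_simp
  have hguarantee : guarantee K lam c Qb Tb = (K * (a * u qstar - c * qstar) : ℝ) := by
    rw [guarantee_eq_of_profit_eq ⟨_, hlam_eq ▸ dirac_const_mem_Fcal a⟩ hCS.profit_eq, htbar,
      hqK, hqbar, hlam_eq]
    ring_nf
  refine ⟨hCS.IC, hCS.IR (by exact_mod_cast hKpos.ne') (by rw [hqbar]; positivity) htbar.le,
    fun Q T hQ _ hIR => hguarantee ▸ guarantee_le_of_IR a hlam_eq (fun q hq => ?_) hQ hIR⟩
  refine hu_conc.concaveOn.mul_sub_mul_le_of_hasDerivAt hqs_pos.le hq (hu_deriv _ hqs_pos)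
    a.2.1 ?_
  simp only [a]
  field_simp
  linarith

/-- The committed spend mechanism `(Q^{b*},T^{b*})` with parameters
`q̄* = K·(u')⁻¹(cK/λ)`, `t̄* = λ·u(q̄*/K)` and price `p* = c`—where `Q^{b*}(F,θ)` is a
maximizer of the committed spend objective and
`T^{b*}(F,θ) = t̄* + c·(∑ᵢ Q^{b*}ᵢ(F,θ) − q̄*)`—is IC, IR and robustly optimal. -/
theorem stmt13
    (K : ℕ) (hK : 1 ≤ K) (c lam : ℝ) (hc : 0 < c) (hlam : 0 < lam ∧ lam < K)
    (u u' : ℝ → ℝ)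
    (hu_mono : StrictMonoOn u (Set.Ici 0))
    (hu_conc : StrictConcaveOn ℝ (Set.Ici 0) u)
    (hu_nonneg : ∀ x, 0 ≤ x → 0 ≤ u x)
    (hu_deriv : ∀ x, 0 < x → HasDerivAt u (u' x) x)
    (hu'_zero : Tendsto u' (nhdsWithin 0 (Set.Ioi 0)) atTop)
    (hu'_top : Tendsto u' atTop (nhds 0))
    (qstar : ℝ) (hqs_pos : 0 < qstar) (hqs : lam * u' qstar = c * K)
    (qbar tbar : ℝ) (hqbar : qbar = K * qstar) (htbar : tbar = lam * u (qbar / K))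
    (Qb : Measure (Theta K) → Theta K → Fin K → ℝ) (Tb : Measure (Theta K) → Theta K → ℝ)
    (hQb : ∀ F θ, Qb F θ ∈ feasible K qbar ∧
      ∀ q ∈ feasible K qbar, csObj K u θ qbar tbar c q ≤ csObj K u θ qbar tbar c (Qb F θ))
    (hTb : ∀ F θ, Tb F θ = tbar + c * (∑ i, Qb F θ i - qbar)) :
    IC K lam u Qb Tb ∧ IR K lam u Qb Tb ∧
      ∀ Q T, (∀ F θ i, 0 ≤ Q F θ i) → IC K lam u Q T → IR K lam u Q T →
        guarantee K lam c Q T ≤ guarantee K lam c Qb Tb :=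
  stmt13_general K c lam hlam u u' hu_conc hu_deriv qstar hqs_pos hqs qbar tbar hqbar htbar Qb Tb
    hQb hTb

end
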